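/- arXiv:2206.14369 — 3 statements merged into one kernel-verified Lean document; each statement's English description precedes it below -/
import Mathlib

section
/- Robust oracle feasibility: Assume there exists q^c with q̲ ≤ q^c ≤ q̄ such that v̂' := X̂ q^c + v^par satisfies v̲ + (η+ε)1 ≤ v̂' ≤ v̄ − (η+ε)1, and let ρ(ε) = ε/(2‖q̄−q̲‖₂). Then u := q^c − q^c_prev (where q̲ ≤ q^c_prev ≤ q̄) satisfies the constraints q̲ ≤ q^c_prev + u ≤ q̄ and v̲ + (η + ρ(ε)‖u‖₂)1 ≤ v(t) + X̂ u ≤ v̄ − (η + ρ(ε)‖u‖₂)1, where v(t) = X̂ q^c_prev + v^par. -/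
/-- Robust oracle feasibility: if some `q^c ∈ [q̲, q̄]` makes `v̂' = X̂ q^c + v^par` satisfy
the voltage limits padded by `η + ε`, then `u = q^c - q^c_prev` is feasible for the robust
oracle: it keeps the reactive power within limits and the predicted voltage within the limits
padded by `η + ρ(ε)‖u‖₂`, where `ρ(ε) = ε / (2‖q̄ - q̲‖₂)`. -/
theorem robust_oracle_feasible {n : ℕ}
    (Xhat : Matrix (Fin n) (Fin n) ℝ) (hXsym : Xhat.IsSymm)
    (vpar qlo qhi qprev vlo vhi : Fin n → ℝ)
    (hprev : ∀ i, qlo i ≤ qprev i ∧ qprev i ≤ qhi i)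
    (hne : qhi ≠ qlo) (η ε : ℝ) (hη : 0 ≤ η) (hε : 0 < ε)
    (qc : Fin n → ℝ)
    (hqc : ∀ i, qlo i ≤ qc i ∧ qc i ≤ qhi i)
    (hfeas : ∀ i, vlo i + (η + ε) ≤ (Xhat.mulVec qc + vpar) i ∧
      (Xhat.mulVec qc + vpar) i ≤ vhi i - (η + ε)) :
    (∀ i, qlo i ≤ (qprev + (qc - qprev)) i ∧ (qprev + (qc - qprev)) i ≤ qhi i) ∧
    (∀ i,
      vlo i + (η + (ε / (2 * Real.sqrt (∑ k, (qhi k - qlo k) ^ 2))) *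
          Real.sqrt (∑ k, (qc k - qprev k) ^ 2))
        ≤ ((Xhat.mulVec qprev + vpar) + Xhat.mulVec (qc - qprev)) i ∧
      ((Xhat.mulVec qprev + vpar) + Xhat.mulVec (qc - qprev)) i
        ≤ vhi i - (η + (ε / (2 * Real.sqrt (∑ k, (qhi k - qlo k) ^ 2))) *
          Real.sqrt (∑ k, (qc k - qprev k) ^ 2))) := by
  have hS : ∀ k, (qc k - qprev k) ^ 2 ≤ (qhi k - qlo k) ^ 2 := by
    intro k
    have h1 := hqc k; have h2 := hprev k
    have : |qc k - qprev k| ≤ |qhi k - qlo k| := by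
      rw [abs_sub_le_iff, abs_of_nonneg (by linarith [h1.1, h1.2, h2.1, h2.2])]
      constructor <;> linarith [h1.1, h1.2, h2.1, h2.2]
    calc (qc k - qprev k) ^ 2 = |qc k - qprev k| ^ 2 := (sq_abs _).symm
      _ ≤ |qhi k - qlo k| ^ 2 := pow_le_pow_left₀ (abs_nonneg _) this 2
      _ = (qhi k - qlo k) ^ 2 := sq_abs _
  have hsum : (∑ k, (qc k - qprev k) ^ 2) ≤ ∑ k, (qhi k - qlo k) ^ 2 :=
    Finset.sum_le_sum fun k _ => hS k
  have hsqrt : Real.sqrt (∑ k, (qc k - qprev k) ^ 2) ≤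
      Real.sqrt (∑ k, (qhi k - qlo k) ^ 2) := Real.sqrt_le_sqrt hsum
  have hpos : 0 < Real.sqrt (∑ k, (qhi k - qlo k) ^ 2) := by
    rw [Real.sqrt_pos]
    obtain ⟨i, hi⟩ := Function.ne_iff.mp hne
    have h0 : 0 < (qhi i - qlo i) ^ 2 := by
      have : qhi i - qlo i ≠ 0 := sub_ne_zero_of_ne hi
      positivity
    exact lt_of_lt_of_le h0 (Finset.single_le_sum (f := fun k => (qhi k - qlo k) ^ 2)
      (fun k _ => sq_nonneg _) (Finset.mem_univ i))
  have key : (ε / (2 * Real.sqrt (∑ k, (qhi k - qlo k) ^ 2))) *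
      Real.sqrt (∑ k, (qc k - qprev k) ^ 2) ≤ ε := by
    rw [div_mul_eq_mul_div, div_le_iff₀ (by positivity)]
    have h := mul_le_mul_of_nonneg_left hsqrt (le_of_lt hε)
    nlinarith [Real.sqrt_nonneg (∑ k, (qc k - qprev k) ^ 2)]
  have heq : ∀ i, ((Xhat.mulVec qprev + vpar) + Xhat.mulVec (qc - qprev)) i =
      (Xhat.mulVec qc + vpar) i := by
    intro i
    simp [Matrix.mulVec_sub, Pi.add_apply, Pi.sub_apply]
    ring
  refine ⟨fun i => by simpa using hqc i, fun i => ?_⟩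
  rw [heq i]
  constructor
  · linarith [(hfeas i).1]
  · linarith [(hfeas i).2]
end

section
/- Robust oracle safety: Suppose u ∈ ℝⁿ satisfies v̲ + (η + ρ‖u‖₂)1 ≤ v(t) + X̂ u ≤ v̄ − (η + ρ‖u‖₂)1 componentwise. Then for every symmetric matrix X with ‖X − X̂‖_△ ≤ ρ and every w ∈ ℝⁿ with ‖w‖_∞ ≤ η, the next state v(t+1) = v(t) + X u + w satisfies v̲ ≤ v(t+1) ≤ v̄ componentwise. -/
/-- The upper-triangle norm `‖A‖_△ = sqrt (Σ_{i ≤ j} A i j ^ 2)`. -/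
noncomputable def triNorm {n : ℕ} (A : Matrix (Fin n) (Fin n) ℝ) : ℝ :=
  Real.sqrt (∑ k, ∑ j ∈ Finset.Ici k, A k j ^ 2)

open Finset

theorem Real.abs_sum_mul_le_sqrt_mul_sqrt {ι : Type*} (s : Finset ι) (f g : ι → ℝ) :
    |∑ i ∈ s, f i * g i| ≤ √(∑ i ∈ s, f i ^ 2) * √(∑ i ∈ s, g i ^ 2) := by
  refine abs_le.2 ⟨?_, Real.sum_mul_le_sqrt_mul_sqrt s f g⟩
  have h := Real.sum_mul_le_sqrt_mul_sqrt s (fun i ↦ -f i) g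
  simp only [neg_mul, sum_neg_distrib, neg_sq] at h
  linarith

/-- Row `i` of a symmetric matrix is spread over the upper triangle: its entries `E i j` with
`j < i` appear there as `E j i`, the others as themselves. -/
theorem Matrix.IsSymm.sum_sq_row_le_sum_sq_upper {ι : Type*} [Fintype ι] [LinearOrder ι]
    [LocallyFiniteOrderTop ι] {E : Matrix ι ι ℝ} (hE : E.IsSymm) (i : ι) :
    ∑ j, E i j ^ 2 ≤ ∑ k, ∑ j ∈ Ici k, E k j ^ 2 := by
  have hrow : ∑ j, E i j ^ 2
      = ∑ k, ((if k < i then E k i ^ 2 else 0) + if k = i then ∑ j ∈ Ici i, E i j ^ 2 else 0) := by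
    rw [sum_add_distrib, sum_ite_eq', if_pos (mem_univ i), ← sum_filter,
      ← sum_filter_add_sum_filter_not univ (· < i)]
    congr 1
    · exact sum_congr rfl fun k _ ↦ by rw [hE.apply i k]
    · exact sum_congr (by ext; simp) fun _ _ ↦ rfl
  rw [hrow]
  refine sum_le_sum fun k _ ↦ ?_
  rcases lt_trichotomy k i with hki | rfl | hik
  · simpa [hki, hki.ne] using
      single_le_sum (f := fun j ↦ E k j ^ 2) (fun _ _ ↦ sq_nonneg _) (mem_Ici.2 hki.le)
  · simp
  · simpa [hik.not_gt, hik.ne'] using sum_nonneg fun j (_ : j ∈ Ici k) ↦ sq_nonneg (E k j)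

theorem Matrix.IsSymm.abs_mulVec_apply_le_triNorm_mul {n : ℕ} {E : Matrix (Fin n) (Fin n) ℝ}
    (hE : E.IsSymm) (u : Fin n → ℝ) (i : Fin n) :
    |E.mulVec u i| ≤ triNorm E * √(∑ j, u j ^ 2) :=
  calc |E.mulVec u i| = |∑ j, E i j * u j| := rfl
    _ ≤ √(∑ j, E i j ^ 2) * √(∑ j, u j ^ 2) := Real.abs_sum_mul_le_sqrt_mul_sqrt _ _ _
    _ ≤ triNorm E * √(∑ j, u j ^ 2) := by
      gcongr
      exact Real.sqrt_le_sqrt (hE.sum_sq_row_le_sum_sq_upper i)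

theorem robust_oracle_safe_general {n : ℕ}
    (vt u vlo vhi : Fin n → ℝ)
    (Xhat : Matrix (Fin n) (Fin n) ℝ) (hXhsym : Xhat.IsSymm)
    (η ρ : ℝ)
    (hsafe : ∀ i,
      vlo i + (η + ρ * Real.sqrt (∑ j, u j ^ 2)) ≤ (vt + Xhat.mulVec u) i ∧
      (vt + Xhat.mulVec u) i ≤ vhi i - (η + ρ * Real.sqrt (∑ j, u j ^ 2))) :
    ∀ X : Matrix (Fin n) (Fin n) ℝ, X.IsSymm → triNorm (X - Xhat) ≤ ρ →
    ∀ w : Fin n → ℝ, (∀ i, |w i| ≤ η) →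
    ∀ i, vlo i ≤ (vt + X.mulVec u + w) i ∧ (vt + X.mulVec u + w) i ≤ vhi i := by
  intro X hX hXρ w hw i
  have hmodel : X.mulVec u = Xhat.mulVec u + (X - Xhat).mulVec u := by
    rw [Matrix.sub_mulVec, add_sub_cancel]
  have herr := abs_le.1 <| ((hX.sub hXhsym).abs_mulVec_apply_le_triNorm_mul u i).trans <|
    mul_le_mul_of_nonneg_right hXρ (Real.sqrt_nonneg _)
  have hnoise := abs_le.1 (hw i)
  obtain ⟨hlo, hhi⟩ := hsafe i
  simp only [Pi.add_apply, hmodel] at hlo hhi ⊢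
  constructor <;> linarith [herr.1, herr.2, hnoise.1, hnoise.2]

/-- Robust oracle safety: if the predicted voltage `v(t) + X̂ u` obeys the limits padded by
`η + ρ‖u‖₂`, then for every model `X` with `‖X - X̂‖_△ ≤ ρ` and every noise `w` with
`‖w‖_∞ ≤ η`, the next state `v(t+1) = v(t) + X u + w` remains within the voltage limits. -/
theorem robust_oracle_safe {n : ℕ}
    (vt u vlo vhi : Fin n → ℝ)
    (Xhat : Matrix (Fin n) (Fin n) ℝ) (hXhsym : Xhat.IsSymm)
    (η ρ : ℝ) (hη : 0 ≤ η) (hρ : 0 ≤ ρ)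
    (hsafe : ∀ i,
      vlo i + (η + ρ * Real.sqrt (∑ j, u j ^ 2)) ≤ (vt + Xhat.mulVec u) i ∧
      (vt + Xhat.mulVec u) i ≤ vhi i - (η + ρ * Real.sqrt (∑ j, u j ^ 2))) :
    ∀ X : Matrix (Fin n) (Fin n) ℝ, X.IsSymm → triNorm (X - Xhat) ≤ ρ →
    ∀ w : Fin n → ℝ, (∀ i, |w i| ≤ η) →
    ∀ i, vlo i ≤ (vt + X.mulVec u + w) i ∧ (vt + X.mulVec u + w) i ≤ vhi i :=
  robust_oracle_safe_general vt u vlo vhi Xhat hXhsym η ρ hsafe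
end

section
/- The matrix X⋆ with entries X⋆_{ij} = 2 Σ_{(h,k) ∈ P_i ∩ P_j} x_{hk}, where P_i is the edge set of the root-to-i path in a tree with positive edge weights x_{hk} > 0, is positive definite. -/
/-!
Writing `a_e` for the indicator vector of the targets whose root path uses the edge `e`, one has
`X⋆ = Σ_e 2 x_e a_e a_eᵀ`, so `vᵀ X⋆ v = Σ_e 2 x_e (a_e ⬝ v)²` and it suffices that no `v ≠ 0` is
orthogonal to every `a_e`. Given `v ≠ 0`, take `i` with `v_i ≠ 0` whose root path is as long as
possible, and let `e` be the last edge of that path. Any other root path through `e` passes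
through `i`, so by uniqueness of paths in a tree it extends the path to `i` and is strictly
longer; hence `a_e ⬝ v = v_i ≠ 0`.
-/

open Finset

namespace Matrix

theorem posDef_sum_smul_vecMulVec {ι m : Type*} [Fintype m] (s : Finset ι)
    (w : ι → ℝ) (hw : ∀ e ∈ s, 0 < w e) (a : ι → m → ℝ)
    (ha : ∀ v, (∀ e ∈ s, a e ⬝ᵥ v = 0) → v = 0) :
    (∑ e ∈ s, w e • vecMulVec (a e) (a e)).PosDef := by
  refine PosDef.of_dotProduct_mulVec_pos ?_ fun v hv => ?_
  · ext i j
    simp [Matrix.sum_apply, vecMulVec_apply, mul_comm]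
  have hquad : star v ⬝ᵥ ((∑ e ∈ s, w e • vecMulVec (a e) (a e)) *ᵥ v) =
      ∑ e ∈ s, w e * (a e ⬝ᵥ v) ^ 2 := by
    simp only [star_trivial, sum_mulVec, smul_mulVec, vecMulVec_mulVec, op_smul_eq_smul,
      sum_dotProduct, smul_dotProduct, smul_eq_mul, dotProduct_comm v, sq]
  obtain ⟨e, he, hne⟩ : ∃ e ∈ s, a e ⬝ᵥ v ≠ 0 := by
    by_contra! h
    exact hv (ha v h)
  rw [hquad]
  exact sum_pos' (fun e he => mul_nonneg (hw e he).le (sq_nonneg _))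
    ⟨e, he, mul_pos (hw e he) (by positivity)⟩

theorem of_sum_inter_eq_sum_smul_vecMulVec {ι m R : Type*} [CommSemiring R] [DecidableEq ι]
    (s : Finset ι) (P : m → Finset ι) (hP : ∀ i, P i ⊆ s) (w : ι → R) :
    of (fun i j => ∑ e ∈ P i ∩ P j, w e) =
      ∑ e ∈ s, w e • vecMulVec (fun i => if e ∈ P i then 1 else 0)
        (fun i => if e ∈ P i then 1 else 0) := by
  ext i j
  rw [of_apply, Matrix.sum_apply, ← inter_eq_right.2 (inter_subset_left.trans (hP i)),
    ← sum_ite_mem]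
  refine sum_congr rfl fun e _ => ?_
  by_cases hi : e ∈ P i <;> by_cases hj : e ∈ P j <;> simp [hi, hj, vecMulVec_apply]

end Matrix

namespace SimpleGraph

variable {V : Type*} {G : SimpleGraph V}

theorem IsAcyclic.length_lt_of_mem_support (hG : G.IsAcyclic) {r u w : V} (p : G.Path r w)
    (q : G.Path r u) (hu : u ∈ (p : G.Walk r w).support) (huw : u ≠ w) :
    (q : G.Walk r u).length < (p : G.Walk r w).length := by
  classical
  obtain rfl : q = ⟨_, p.2.takeUntil hu⟩ := (hG.subsingleton_path r u).elim _ _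
  exact Walk.length_takeUntil_lt_length hu huw

theorem IsAcyclic.eq_zero_of_sum_filter_mem_edges_eq_zero [DecidableEq V] (hG : G.IsAcyclic)
    {ι : Type*} [Fintype ι] {r : V} {t : ι → V} (ht : Function.Injective t)
    (htr : ∀ i, t i ≠ r) (p : ∀ i, G.Path r (t i)) (v : ι → ℝ)
    (hv : ∀ e ∈ G.edgeSet, ∑ i with e ∈ (p i : G.Walk r (t i)).edges, v i = 0) : v = 0 := by
  by_contra hv0
  obtain ⟨j, hj, hjmax⟩ := exists_max_image {i | v i ≠ 0}
    (fun i => (p i : G.Walk r (t i)).length) (by simpa [Finset.Nonempty, funext_iff] using hv0)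
  have hnil : ¬ (p j : G.Walk r (t j)).Nil := Walk.not_nil_of_ne (htr j).symm
  set e := s((p j : G.Walk r (t j)).penultimate, t j)
  have he : e ∈ (p j : G.Walk r (t j)).edges := Walk.mk_penultimate_end_mem_edges hnil
  have hsum : ∑ i with e ∈ (p i : G.Walk r (t i)).edges, v i = v j := by
    refine sum_eq_single_of_mem j (mem_filter.2 ⟨mem_univ _, he⟩) fun i hi hij => ?_
    by_contra hvi
    have hlt := hG.length_lt_of_mem_support (p i) (p j)
      (Walk.snd_mem_support_of_mem_edges _ (mem_filter.1 hi).2) (ht.ne (Ne.symm hij))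
    exact (hjmax i (by simpa using hvi)).not_gt hlt
  have hvj : v j ≠ 0 := by simpa using hj
  exact hvj (hsum ▸ hv e ((p j : G.Walk r (t j)).edges_subset_edgeSet he))

end SimpleGraph

open Matrix SimpleGraph in
/-- For a tree rooted at node `0` with positive edge weights, the matrix
`X⋆_{ij} = 2 Σ_{e ∈ P_i ∩ P_j} x_e`, where `P_i` is the edge set of the root-to-`i` path,
is positive definite. -/
theorem path_intersection_matrix_posDef {n : ℕ}
    (G : SimpleGraph (Fin (n + 1))) (hG : G.IsTree)
    (x : Sym2 (Fin (n + 1)) → ℝ) (hx : ∀ e ∈ G.edgeSet, 0 < x e)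
    (P : Fin n → Finset (Sym2 (Fin (n + 1))))
    (hP : ∀ i : Fin n, ∃ p : G.Path 0 i.succ,
      P i = (p : G.Walk 0 i.succ).edges.toFinset)
    (X : Matrix (Fin n) (Fin n) ℝ)
    (hX : ∀ i j, X i j = 2 * ∑ e ∈ P i ∩ P j, x e) :
    X.PosDef := by
  classical
  choose p hp using hP
  have hPsub : ∀ i, P i ⊆ G.edgeFinset := fun i e he => by
    rw [hp, List.mem_toFinset] at he
    exact mem_edgeFinset.2 ((p i : G.Walk 0 i.succ).edges_subset_edgeSet he)
  have hXsum : X = of fun i j => ∑ e ∈ P i ∩ P j, 2 * x e := by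
    ext i j
    rw [hX, mul_sum, of_apply]
  rw [hXsum, of_sum_inter_eq_sum_smul_vecMulVec _ _ hPsub]
  refine posDef_sum_smul_vecMulVec _ _ (fun e he => ?_) _ fun v hv => ?_
  · have := hx e (mem_edgeFinset.1 he)
    positivity
  refine hG.isAcyclic.eq_zero_of_sum_filter_mem_edges_eq_zero (Fin.succ_injective n)
    Fin.succ_ne_zero p v fun e he => ?_
  simpa [dotProduct, sum_filter, hp] using hv e (mem_edgeFinset.2 he)
end
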